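/- arXiv:2002.06263 — 3 statements merged into one kernel-verified Lean document; each statement's English description precedes it below -/
import Mathlib

section
/- Let L be a Lévy sheet with exponent Ψ(ξ) = a(ξ) + ib(ξ), θ ∈ (0,2π) with a(θ) > 0. Then for 0 ≤ x₁ ≤ x₂, 0 ≤ y₂ ≤ y₁, E[exp(iθ L(x₁,y₁) + iθ L(x₂,y₂))] has modulus at most exp(−[(x₂−x₁)y₂ + (y₁−y₂)x₁] a(θ)). -/
/-!
Split `[0,x₂]×[0,y₂] ∪ [0,x₁]×[0,y₁]` into the overlap `(0,x₁]×(0,y₂]` and the two disjoint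
rectangles `(x₁,x₂]×(0,y₂]`, `(0,x₁]×(y₂,y₁]`. Since `L` vanishes on the axes,
`θ (L(x₁,y₁) + L(x₂,y₂))` is `2θ` times the increment over the overlap plus `θ` times the
increments over the other two, so the Lévy sheet property computes the expectation as
`exp(-(x₁y₂ Ψ(2θ) + [(x₂-x₁)y₂ + x₁(y₁-y₂)] Ψ(θ)))`. Its modulus only sees `a = Re Ψ`, and the
overlap factor has modulus `≤ 1` because `a(2θ) ≥ 0`.
-/

open MeasureTheory Set Function

def rectIncrement {M : Type*} [AddCommGroup M] (F : ℝ → ℝ → M) (s s' t t' : ℝ) : M :=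
  F s' t' - F s' t - F s t' + F s t

def IsLevySheetChar {Ω : Type*} [MeasurableSpace Ω] (μ : Measure Ω) (L : ℝ → ℝ → Ω → ℝ)
    (Ψ : ℝ → ℂ) : Prop :=
  ∀ (k : ℕ) (s t s' t' ξ : ℕ → ℝ),
    (∀ j, j < k → 0 ≤ s j ∧ s j ≤ s' j ∧ 0 ≤ t j ∧ t j ≤ t' j) →
    (∀ i j, i < k → j < k → i ≠ j →
      Disjoint (Ioc (s i) (s' i) ×ˢ Ioc (t i) (t' i)) (Ioc (s j) (s' j) ×ˢ Ioc (t j) (t' j))) →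
    ∫ ω, Complex.exp (Complex.I *
        (∑ j ∈ Finset.range k, (ξ j : ℂ) *
          ((rectIncrement (L · · ω) (s j) (s' j) (t j) (t' j) : ℝ) : ℂ))) ∂μ
      = Complex.exp (-∑ j ∈ Finset.range k, (((s' j - s j) * (t' j - t j) : ℝ) : ℂ) * Ψ (ξ j))

theorem rectIncrement_overlap_split {M : Type*} [AddCommGroup M] [Module ℝ M] (F : ℝ → ℝ → M)
    (hF₀ : ∀ x, F x 0 = 0) (h₀F : ∀ y, F 0 y = 0) (θ x₁ x₂ y₁ y₂ : ℝ) :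
    (2 * θ) • rectIncrement F 0 x₁ 0 y₂ + θ • rectIncrement F x₁ x₂ 0 y₂
        + θ • rectIncrement F 0 x₁ y₂ y₁ = θ • (F x₁ y₁ + F x₂ y₂) := by
  simp only [rectIncrement, hF₀, h₀F, sub_zero, add_zero, smul_add, smul_sub]
  module

namespace IsLevySheetChar

variable {Ω : Type*} [MeasurableSpace Ω] {μ : Measure Ω} {L : ℝ → ℝ → Ω → ℝ} {Ψ : ℝ → ℂ}

theorem integral_exp_fin (hL : IsLevySheetChar μ L Ψ) {k : ℕ}
    (s t s' t' ξ : Fin k → ℝ) (hst : ∀ j, 0 ≤ s j ∧ s j ≤ s' j ∧ 0 ≤ t j ∧ t j ≤ t' j)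
    (hdisj : Pairwise (Disjoint on fun j => Ioc (s j) (s' j) ×ˢ Ioc (t j) (t' j))) :
    ∫ ω, Complex.exp (Complex.I *
        (∑ j, (ξ j : ℂ) * ((rectIncrement (L · · ω) (s j) (s' j) (t j) (t' j) : ℝ) : ℂ))) ∂μ
      = Complex.exp (-∑ j, (((s' j - s j) * (t' j - t j) : ℝ) : ℂ) * Ψ (ξ j)) := by
  let ext : (Fin k → ℝ) → ℕ → ℝ := fun f n => if hn : n < k then f ⟨n, hn⟩ else 0
  have key := hL k (ext s) (ext t) (ext s') (ext t') (ext ξ)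
    (fun j hj => by simpa [ext, hj] using hst ⟨j, hj⟩)
    (fun i j hi hj hij => by
      simpa [ext, hi, hj] using hdisj (i := ⟨i, hi⟩) (j := ⟨j, hj⟩) (by simpa))
  simpa [Finset.sum_range, ext] using key

theorem integral_exp_add_eq (hL : IsLevySheetChar μ L Ψ)
    (hzero : ∀ x y ω, L x 0 ω = 0 ∧ L 0 y ω = 0) (θ : ℝ) {x₁ x₂ y₁ y₂ : ℝ}
    (hx₀ : 0 ≤ x₁) (hx : x₁ ≤ x₂) (hy₀ : 0 ≤ y₂) (hy : y₂ ≤ y₁) :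
    ∫ ω, Complex.exp (Complex.I * (θ : ℂ) * ((L x₁ y₁ ω + L x₂ y₂ ω : ℝ) : ℂ)) ∂μ
      = Complex.exp (-((x₁ * y₂ : ℝ) * Ψ (2 * θ)
          + ((x₂ - x₁) * y₂ + x₁ * (y₁ - y₂) : ℝ) * Ψ θ)) := by
  have hsplit := hL.integral_exp_fin ![0, x₁, 0] ![0, 0, y₂] ![x₁, x₂, x₁] ![y₂, y₂, y₁]
    ![2 * θ, θ, θ] (by intro j; fin_cases j <;> simp [hx₀, hx, hy₀, hy])
    (by intro i j hij; fin_cases i <;> fin_cases j <;> simp [onFun, disjoint_prod] at hij ⊢)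
  have hintegrand : ∀ ω, Complex.I * ∑ j, (![2 * θ, θ, θ] j : ℂ) * ((rectIncrement (L · · ω)
      (![0, x₁, 0] j) (![x₁, x₂, x₁] j) (![0, 0, y₂] j) (![y₂, y₂, y₁] j) : ℝ) : ℂ)
      = Complex.I * θ * ((L x₁ y₁ ω + L x₂ y₂ ω : ℝ) : ℂ) := fun ω => by
    have := rectIncrement_overlap_split (L · · ω) (fun x => (hzero x 0 ω).1)
      (fun y => (hzero 0 y ω).2) θ x₁ x₂ y₁ y₂
    simp only [smul_eq_mul] at this
    rw [mul_assoc, ← Complex.ofReal_mul, ← this]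
    simp [Fin.sum_univ_three]
  simp only [hintegrand] at hsplit
  rw [hsplit]
  congr 1
  simp only [Fin.sum_univ_three, Matrix.cons_val_zero, Matrix.cons_val_one, Matrix.cons_val]
  push_cast
  ring

end IsLevySheetChar

theorem levy_sheet_joint_char_modulus_bound_general
    {Ω : Type*} [MeasurableSpace Ω] (μ : Measure Ω)
    (L : ℝ → ℝ → Ω → ℝ) (a b : ℝ → ℝ) (Ψ : ℝ → ℂ)
    (hΨ : ∀ ξ, Ψ ξ = (a ξ : ℂ) + (b ξ : ℂ) * Complex.I)
    (ha : ∀ ξ, 0 ≤ a ξ)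
    (hzero : ∀ x y ω, L x 0 ω = 0 ∧ L 0 y ω = 0)
    -- Lévy sheet: joint characteristic function of increments over pairwise
    -- disjoint rectangles (encodes independence and the Lévy–Khintchine formula)
    (hchar : ∀ (k : ℕ) (s t s' t' ξ : ℕ → ℝ),
      (∀ j, j < k → 0 ≤ s j ∧ s j ≤ s' j ∧ 0 ≤ t j ∧ t j ≤ t' j) →
      (∀ i j, i < k → j < k → i ≠ j →
        Disjoint (Ioc (s i) (s' i) ×ˢ Ioc (t i) (t' i))
                 (Ioc (s j) (s' j) ×ˢ Ioc (t j) (t' j))) →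
      ∫ ω, Complex.exp (Complex.I *
          (∑ j ∈ Finset.range k, (ξ j : ℂ) *
            ((L (s' j) (t' j) ω - L (s' j) (t j) ω - L (s j) (t' j) ω
               + L (s j) (t j) ω : ℝ) : ℂ))) ∂μ
        = Complex.exp (-∑ j ∈ Finset.range k,
            (((s' j - s j) * (t' j - t j) : ℝ) : ℂ) * Ψ (ξ j)))
    (θ : ℝ)
    (x₁ x₂ y₁ y₂ : ℝ) (hx0 : 0 ≤ x₁) (hx : x₁ ≤ x₂) (hy0 : 0 ≤ y₂) (hy : y₂ ≤ y₁) :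
    ‖∫ ω, Complex.exp (Complex.I * (θ : ℂ) * ((L x₁ y₁ ω + L x₂ y₂ ω : ℝ) : ℂ)) ∂μ‖
      ≤ Real.exp (-(((x₂ - x₁) * y₂ + (y₁ - y₂) * x₁) * a θ)) := by
  have hre : ∀ ξ, (Ψ ξ).re = a ξ := by simp [hΨ]
  rw [IsLevySheetChar.integral_exp_add_eq hchar hzero θ hx0 hx hy0 hy, Complex.norm_exp,
    Real.exp_le_exp, Complex.neg_re, Complex.add_re, Complex.re_ofReal_mul, Complex.re_ofReal_mul,
    hre, hre]
  nlinarith [mul_nonneg (mul_nonneg hx0 hy0) (ha (2 * θ))]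

/-- For a Lévy sheet `L` with exponent `Ψ = a + ib`, `θ ∈ (0,2π)` with `a(θ) > 0`,
and `0 ≤ x₁ ≤ x₂`, `0 ≤ y₂ ≤ y₁`,
`|E[exp(iθL(x₁,y₁) + iθL(x₂,y₂))]| ≤ exp(−[(x₂−x₁)y₂ + (y₁−y₂)x₁] a(θ))`. -/
theorem levy_sheet_joint_char_modulus_bound
    {Ω : Type*} [MeasurableSpace Ω] (μ : Measure Ω) [IsProbabilityMeasure μ]
    (L : ℝ → ℝ → Ω → ℝ) (a b : ℝ → ℝ) (Ψ : ℝ → ℂ)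
    (hLmeas : Measurable fun q : ℝ × ℝ × Ω => L q.1 q.2.1 q.2.2)
    (hΨ : ∀ ξ, Ψ ξ = (a ξ : ℂ) + (b ξ : ℂ) * Complex.I)
    (ha : ∀ ξ, 0 ≤ a ξ)
    (hzero : ∀ x y ω, L x 0 ω = 0 ∧ L 0 y ω = 0)
    -- Lévy sheet: joint characteristic function of increments over pairwise
    -- disjoint rectangles (encodes independence and the Lévy–Khintchine formula)
    (hchar : ∀ (k : ℕ) (s t s' t' ξ : ℕ → ℝ),
      (∀ j, j < k → 0 ≤ s j ∧ s j ≤ s' j ∧ 0 ≤ t j ∧ t j ≤ t' j) →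
      (∀ i j, i < k → j < k → i ≠ j →
        Disjoint (Ioc (s i) (s' i) ×ˢ Ioc (t i) (t' i))
                 (Ioc (s j) (s' j) ×ˢ Ioc (t j) (t' j))) →
      ∫ ω, Complex.exp (Complex.I *
          (∑ j ∈ Finset.range k, (ξ j : ℂ) *
            ((L (s' j) (t' j) ω - L (s' j) (t j) ω - L (s j) (t' j) ω
               + L (s j) (t j) ω : ℝ) : ℂ))) ∂μ
        = Complex.exp (-∑ j ∈ Finset.range k,
            (((s' j - s j) * (t' j - t j) : ℝ) : ℂ) * Ψ (ξ j)))
    (θ : ℝ) (hθ : θ ∈ Ioo (0:ℝ) (2 * Real.pi)) (haθ : 0 < a θ)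
    (x₁ x₂ y₁ y₂ : ℝ) (hx0 : 0 ≤ x₁) (hx : x₁ ≤ x₂) (hy0 : 0 ≤ y₂) (hy : y₂ ≤ y₁) :
    ‖∫ ω, Complex.exp (Complex.I * (θ : ℂ) * ((L x₁ y₁ ω + L x₂ y₂ ω : ℝ) : ℂ)) ∂μ‖
      ≤ Real.exp (-(((x₂ - x₁) * y₂ + (y₁ - y₂) * x₁) * a θ)) :=
  levy_sheet_joint_char_modulus_bound_general μ L a b Ψ hΨ ha hzero hchar θ x₁ x₂ y₁ y₂ hx0 hx hy0
    hy
end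

section
/- The Holmgren–Riemann–Liouville kernel K(t,r) = √(2π)(t−r)^{H−1/2} 1_{[0,t]}(r), 0 < H < 1, satisfies: there exist an increasing continuous function G, ρ ∈ (0,1], M > 0, β > 0 such that ∫₀¹ (K(s',r)−K(s,r))² dr ≤ (G(s')−G(s))^ρ for all 0 ≤ s < s' ≤ 1, and ∫_{s₀}^{s₀'} (K(s',r)−K(s,r))² dr ≤ M (s₀'−s₀)^β for all 0 ≤ s < s' ≤ 1 and 0 ≤ s₀ < s₀' ≤ 1. That is, K satisfies conditions (ii') and (iii) of hypothesis (H1'). -/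
/-!
Write `P t r = (t - r) ^ (2H - 1) 1_{[0,t]}(r)`, so that `K t = √(2π P t)`. The elementary bounds
`(√a - √b)² ≤ |a - b|` and `(√a - √b)² ≤ a + b` reduce both conditions to `L¹` bounds on the
explicit kernel `P`, computed by integrating powers: `∫ |P s' - P s| ≤ (s' - s) ^ H / H` (for
`H ≥ 1/2`, `P` is monotone in `t`; for `H < 1/2` it decreases in `t` except on `[s, s']`) and
`∫_a^b P t ≤ (b - a) ^ H / H`, both through `x ^ (2H) - y ^ (2H) ≤ 2 (x - y) ^ H` on `[0, 1]`.
Hence `G t = (2π / H) ^ (1 / H) t`, `ρ = β = H` and `M = 4π / H`.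
-/

open MeasureTheory Set

section SqrtDifference

variable {a b : ℝ}

lemma sqrt_sub_sqrt_sq_le_abs_sub (ha : 0 ≤ a) (hb : 0 ≤ b) : (√a - √b) ^ 2 ≤ |a - b| := by
  have hdiff : a - b = (√a - √b) * (√a + √b) := by
    rw [mul_comm, ← sq_sub_sq, Real.sq_sqrt ha, Real.sq_sqrt hb]
  calc (√a - √b) ^ 2 = |√a - √b| * |√a - √b| := by rw [abs_mul_abs_self, sq]
    _ ≤ |√a - √b| * (√a + √b) := by
        gcongr
        simpa [abs_of_nonneg (Real.sqrt_nonneg _)] using abs_sub (√a) (√b)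
    _ = |a - b| := by
        rw [hdiff, abs_mul, abs_of_nonneg (add_nonneg (Real.sqrt_nonneg a) (Real.sqrt_nonneg b))]

lemma sqrt_sub_sqrt_sq_le_add (ha : 0 ≤ a) (hb : 0 ≤ b) : (√a - √b) ^ 2 ≤ a + b := by
  nlinarith [Real.sq_sqrt ha, Real.sq_sqrt hb, mul_nonneg (Real.sqrt_nonneg a) (Real.sqrt_nonneg b)]

variable {α : Type*} [MeasurableSpace α] {μ : Measure α} {f g : α → ℝ}

lemma integrable_sqrt_sub_sqrt_sq (hf0 : 0 ≤ f) (hg0 : 0 ≤ g) (hf : Integrable f μ)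
    (hg : Integrable g μ) : Integrable (fun x => (√(f x) - √(g x)) ^ 2) μ :=
  (hf.add hg).mono' (((Real.continuous_sqrt.comp_aestronglyMeasurable hf.1).sub
    (Real.continuous_sqrt.comp_aestronglyMeasurable hg.1)).pow 2) <| ae_of_all _ fun x => by
    rw [Real.norm_of_nonneg (sq_nonneg _)]
    exact sqrt_sub_sqrt_sq_le_add (hf0 x) (hg0 x)

lemma integral_sqrt_sub_sqrt_sq_le_integral_abs_sub (hf0 : 0 ≤ f) (hg0 : 0 ≤ g)
    (hf : Integrable f μ) (hg : Integrable g μ) :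
    ∫ x, (√(f x) - √(g x)) ^ 2 ∂μ ≤ ∫ x, |f x - g x| ∂μ :=
  integral_mono (integrable_sqrt_sub_sqrt_sq hf0 hg0 hf hg) (hf.sub hg).abs fun x =>
    sqrt_sub_sqrt_sq_le_abs_sub (hf0 x) (hg0 x)

lemma integral_sqrt_sub_sqrt_sq_le_integral_add (hf0 : 0 ≤ f) (hg0 : 0 ≤ g)
    (hf : Integrable f μ) (hg : Integrable g μ) :
    ∫ x, (√(f x) - √(g x)) ^ 2 ∂μ ≤ ∫ x, f x ∂μ + ∫ x, g x ∂μ := by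
  rw [← integral_add hf hg]
  exact integral_mono (integrable_sqrt_sub_sqrt_sq hf0 hg0 hf hg) (hf.add hg) fun x =>
    sqrt_sub_sqrt_sq_le_add (hf0 x) (hg0 x)

end SqrtDifference

lemma rpow_two_mul_sub_rpow_two_mul_le {H x y : ℝ} (hH0 : 0 ≤ H) (hH1 : H ≤ 1) (hy : 0 ≤ y)
    (hyx : y ≤ x) (hx1 : x ≤ 1) : x ^ (2 * H) - y ^ (2 * H) ≤ 2 * (x - y) ^ H := by
  have hx0 : 0 ≤ x := hy.trans hyx
  have hsub : x ^ H - y ^ H ≤ (x - y) ^ H := by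
    have h : (y + (x - y)) ^ H ≤ y ^ H + (x - y) ^ H := NNReal.coe_le_coe.2
      (NNReal.rpow_add_le_add_rpow ⟨y, hy⟩ ⟨x - y, sub_nonneg.2 hyx⟩ hH0 hH1)
    rw [add_sub_cancel] at h
    linarith
  have hsum : x ^ H + y ^ H ≤ 2 := by
    linarith [Real.rpow_le_one hx0 hx1 hH0, Real.rpow_le_one hy (hyx.trans hx1) hH0]
  rw [mul_comm 2 H, Real.rpow_mul hx0, Real.rpow_mul hy, Real.rpow_two, Real.rpow_two, sq_sub_sq]
  exact mul_le_mul hsum hsub (sub_nonneg.2 (Real.rpow_le_rpow hy hyx hH0)) zero_le_two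

section SubRpow

variable {p t a b : ℝ}

lemma integrableOn_sub_rpow (hp : -1 < p) : IntegrableOn (fun r => (t - r) ^ p) (Icc a b) := by
  rcases le_or_gt a b with hab | hba
  · rw [integrableOn_Icc_iff_integrableOn_Ioc, ← intervalIntegrable_iff_integrableOn_Ioc_of_le hab]
    simpa only [sub_sub_cancel] using
      ((intervalIntegral.intervalIntegrable_rpow' hp (a := t - b) (b := t - a)).comp_sub_left
        t).symm
  · simp [Icc_eq_empty_of_lt hba]

lemma integral_Icc_sub_rpow (hp : -1 < p) (hab : a ≤ b) :
    ∫ r in Icc a b, (t - r) ^ p = ((t - a) ^ (p + 1) - (t - b) ^ (p + 1)) / (p + 1) := by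
  rw [integral_Icc_eq_integral_Ioc, ← intervalIntegral.integral_of_le hab,
    intervalIntegral.integral_comp_sub_left (fun x => x ^ p) t, integral_rpow (Or.inl hp)]

end SubRpow

noncomputable def powerKernel (p t r : ℝ) : ℝ := (Icc 0 t).indicator (fun r => (t - r) ^ p) r

namespace powerKernel

variable {p s s' t : ℝ}

lemma nonneg (p t r : ℝ) : 0 ≤ powerKernel p t r :=
  indicator_nonneg (fun _ hr => Real.rpow_nonneg (sub_nonneg.2 hr.2) _) r

lemma integrable (hp : -1 < p) : Integrable (powerKernel p t) :=
  (integrableOn_sub_rpow hp).integrable_indicator measurableSet_Icc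

lemma integral_eq (hp : -1 < p) (ht : 0 ≤ t) :
    ∫ r, powerKernel p t r = t ^ (p + 1) / (p + 1) := by
  unfold powerKernel
  rw [integral_indicator measurableSet_Icc, integral_Icc_sub_rpow hp ht, sub_zero,
    sub_self, Real.zero_rpow (by linarith), sub_zero]

lemma mono_of_nonneg (hp : 0 ≤ p) (hss' : s ≤ s') (r : ℝ) :
    powerKernel p s r ≤ powerKernel p s' r := by
  by_cases hr : r ∈ Icc 0 s
  · simp only [powerKernel]
    rw [indicator_of_mem hr, indicator_of_mem (Icc_subset_Icc_right hss' hr)]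
    exact Real.rpow_le_rpow (sub_nonneg.2 hr.2) (by linarith) hp
  · exact (indicator_of_notMem hr _).trans_le (nonneg p s' r)

lemma abs_sub_le_of_nonpos (hp : p ≤ 0) (hs : 0 ≤ s) (hss' : s ≤ s') (r : ℝ) :
    |powerKernel p s' r - powerKernel p s r|
      ≤ powerKernel p s r - powerKernel p s' r
        + 2 * (Icc s s').indicator (fun r => (s' - r) ^ p) r := by
  have hP := nonneg p s r
  have hP' := nonneg p s' r
  by_cases hfresh : r ∈ Icc s s'
  · have hP'r : powerKernel p s' r = (s' - r) ^ p :=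
      indicator_of_mem (show r ∈ Icc 0 s' from ⟨hs.trans hfresh.1, hfresh.2⟩) _
    rw [indicator_of_mem hfresh, ← hP'r, abs_sub_comm]
    linarith [abs_sub (powerKernel p s r) (powerKernel p s' r), abs_of_nonneg hP, abs_of_nonneg hP']
  rw [indicator_of_notMem hfresh, mul_zero, add_zero]
  by_cases hold : r ∈ Icc 0 s
  · have hrs : r < s := lt_of_le_of_ne hold.2 fun h => hfresh ⟨h.ge, h.le.trans hss'⟩
    simp only [powerKernel]
    rw [indicator_of_mem hold, indicator_of_mem (Icc_subset_Icc_right hss' hold),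
      abs_of_nonpos (sub_nonpos.2 (Real.rpow_le_rpow_of_nonpos (sub_pos.2 hrs) (by linarith) hp))]
    linarith
  · have hnew : r ∉ Icc 0 s' := fun h => hfresh ⟨not_lt.1 fun hrs => hold ⟨h.1, hrs.le⟩, h.2⟩
    simp [powerKernel, indicator_of_notMem hold, indicator_of_notMem hnew]

variable {H : ℝ}

lemma integral_abs_sub_le_of_half_le (hH : 1 / 2 ≤ H) (hH1 : H ≤ 1) (hs : 0 ≤ s)
    (hss' : s ≤ s') (hs'1 : s' ≤ 1) :
    ∫ r, |powerKernel (2 * H - 1) s' r - powerKernel (2 * H - 1) s r| ≤ (s' - s) ^ H / H := by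
  have hp : -1 < 2 * H - 1 := by linarith
  calc ∫ r, |powerKernel (2 * H - 1) s' r - powerKernel (2 * H - 1) s r|
        = ∫ r, (powerKernel (2 * H - 1) s' r - powerKernel (2 * H - 1) s r) :=
          integral_congr_ae <| ae_of_all _ fun r =>
            abs_of_nonneg (sub_nonneg.2 (mono_of_nonneg (by linarith) hss' r))
      _ = (s' ^ (2 * H) - s ^ (2 * H)) / (2 * H) := by
          rw [integral_sub (integrable hp) (integrable hp), integral_eq hp (hs.trans hss'),
            integral_eq hp hs, sub_add_cancel, sub_div]
      _ ≤ 2 * (s' - s) ^ H / (2 * H) := by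
          gcongr
          exact rpow_two_mul_sub_rpow_two_mul_le (by linarith) hH1 hs hss' hs'1
      _ = (s' - s) ^ H / H := mul_div_mul_left _ H two_ne_zero

lemma integral_abs_sub_le_of_le_half (hH0 : 0 < H) (hH : H ≤ 1 / 2) (hs : 0 ≤ s)
    (hss' : s ≤ s') (hs'1 : s' ≤ 1) :
    ∫ r, |powerKernel (2 * H - 1) s' r - powerKernel (2 * H - 1) s r| ≤ (s' - s) ^ H / H := by
  have hp : -1 < 2 * H - 1 := by linarith
  have hfresh : Integrable ((Icc s s').indicator fun r => (s' - r) ^ (2 * H - 1)) :=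
    (integrableOn_sub_rpow hp).integrable_indicator measurableSet_Icc
  have hdiff : Integrable fun r => powerKernel (2 * H - 1) s r - powerKernel (2 * H - 1) s' r :=
    (integrable hp).sub (integrable hp)
  calc ∫ r, |powerKernel (2 * H - 1) s' r - powerKernel (2 * H - 1) s r|
        ≤ ∫ r, (powerKernel (2 * H - 1) s r - powerKernel (2 * H - 1) s' r
            + 2 * (Icc s s').indicator (fun r => (s' - r) ^ (2 * H - 1)) r) :=
          integral_mono ((integrable hp).sub (integrable hp)).abs (hdiff.add (hfresh.const_mul 2))
            (abs_sub_le_of_nonpos (by linarith) hs hss')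
      _ = (s ^ (2 * H) - s' ^ (2 * H)) / (2 * H) + 2 * (s' - s) ^ (2 * H) / (2 * H) := by
          rw [integral_add hdiff (hfresh.const_mul 2),
            integral_sub (integrable hp) (integrable hp), integral_const_mul,
            integral_indicator measurableSet_Icc, integral_eq hp hs,
            integral_eq hp (hs.trans hss'), integral_Icc_sub_rpow hp hss', sub_add_cancel,
            sub_self, Real.zero_rpow (by positivity), sub_zero, sub_div, mul_div_assoc]
      _ ≤ 0 + 2 * (s' - s) ^ H / (2 * H) := by
          gcongr ?_ + 2 * ?_ / _
          · exact div_nonpos_of_nonpos_of_nonneg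
              (sub_nonpos.2 (Real.rpow_le_rpow hs hss' (by positivity))) (by positivity)
          · exact Real.rpow_le_rpow_of_exponent_ge' (by linarith) (by linarith) hH0.le
              (by linarith)
      _ = (s' - s) ^ H / H := by rw [zero_add, mul_div_mul_left _ H two_ne_zero]

lemma integral_abs_sub_le (hH0 : 0 < H) (hH1 : H ≤ 1) (hs : 0 ≤ s) (hss' : s ≤ s')
    (hs'1 : s' ≤ 1) :
    ∫ r, |powerKernel (2 * H - 1) s' r - powerKernel (2 * H - 1) s r| ≤ (s' - s) ^ H / H := by
  rcases le_total H (1 / 2) with hH | hH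
  · exact integral_abs_sub_le_of_le_half hH0 hH hs hss' hs'1
  · exact integral_abs_sub_le_of_half_le hH hH1 hs hss' hs'1

lemma setIntegral_Icc_le (hH0 : 0 < H) (hH1 : H ≤ 1) (ht1 : t ≤ 1) {a b : ℝ}
    (ha : 0 ≤ a) (hab : a ≤ b) :
    ∫ r in Icc a b, powerKernel (2 * H - 1) t r ≤ (b - a) ^ H / H := by
  have hp : -1 < 2 * H - 1 := by linarith
  unfold powerKernel
  rw [setIntegral_indicator measurableSet_Icc, Icc_inter_Icc, sup_eq_left.2 ha]
  rcases le_or_gt a (min b t) with hac | hca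
  · rw [integral_Icc_sub_rpow hp hac, show 2 * H - 1 + 1 = 2 * H by ring]
    calc ((t - a) ^ (2 * H) - (t - min b t) ^ (2 * H)) / (2 * H)
        ≤ 2 * (min b t - a) ^ H / (2 * H) := by
          gcongr
          have key := rpow_two_mul_sub_rpow_two_mul_le (x := t - a) hH0.le hH1
            (sub_nonneg.2 (min_le_right b t)) (by linarith) (by linarith)
          rwa [sub_sub_sub_cancel_left] at key
      _ ≤ 2 * (b - a) ^ H / (2 * H) := by
          gcongr
          exact min_le_left b t
      _ = (b - a) ^ H / H := mul_div_mul_left _ H two_ne_zero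
  · rw [Icc_eq_empty (not_le.2 hca), Measure.restrict_empty, integral_zero_measure]
    exact div_nonneg (Real.rpow_nonneg (sub_nonneg.2 hab) H) hH0.le

lemma sqrt_const_mul_eq_indicator {c : ℝ} (hc : 0 ≤ c) (t r : ℝ) :
    √(c * powerKernel (2 * H - 1) t r)
      = (Icc 0 t).indicator (fun r => √c * (t - r) ^ (H - 1 / 2)) r := by
  by_cases hr : r ∈ Icc 0 t
  · simp only [powerKernel]
    rw [indicator_of_mem hr, indicator_of_mem hr, Real.sqrt_mul hc, Real.sqrt_eq_rpow (_ ^ _),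
      ← Real.rpow_mul (sub_nonneg.2 hr.2)]
    ring_nf
  · simp [powerKernel, indicator_of_notMem hr]

variable {c : ℝ}

lemma setIntegral_sqrt_const_mul_sub_sq_le (hc : 0 ≤ c) (hH0 : 0 < H) (hH1 : H ≤ 1)
    (hs : 0 ≤ s) (hss' : s ≤ s') (hs'1 : s' ≤ 1) (S : Set ℝ) :
    ∫ r in S, (√(c * powerKernel (2 * H - 1) s' r) - √(c * powerKernel (2 * H - 1) s r)) ^ 2
      ≤ c * ((s' - s) ^ H / H) := by
  have hp : -1 < 2 * H - 1 := by linarith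
  have hcP : ∀ t, Integrable fun r => c * powerKernel (2 * H - 1) t r :=
    fun t => (integrable hp).const_mul c
  calc ∫ r in S, (√(c * powerKernel (2 * H - 1) s' r) - √(c * powerKernel (2 * H - 1) s r)) ^ 2
      ≤ ∫ r in S, |c * powerKernel (2 * H - 1) s' r - c * powerKernel (2 * H - 1) s r| :=
        integral_sqrt_sub_sqrt_sq_le_integral_abs_sub (fun r => mul_nonneg hc (nonneg _ _ r))
          (fun r => mul_nonneg hc (nonneg _ _ r)) (hcP s').integrableOn (hcP s).integrableOn
    _ ≤ ∫ r, |c * powerKernel (2 * H - 1) s' r - c * powerKernel (2 * H - 1) s r| :=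
        setIntegral_le_integral ((hcP s').sub (hcP s)).abs (ae_of_all _ fun r => abs_nonneg _)
    _ = c * ∫ r, |powerKernel (2 * H - 1) s' r - powerKernel (2 * H - 1) s r| := by
        simp_rw [← mul_sub, abs_mul, abs_of_nonneg hc, integral_const_mul]
    _ ≤ c * ((s' - s) ^ H / H) := by
        gcongr
        exact integral_abs_sub_le hH0 hH1 hs hss' hs'1

lemma setIntegral_Icc_sqrt_const_mul_sub_sq_le (hc : 0 ≤ c) (hH0 : 0 < H) (hH1 : H ≤ 1)
    (hs1 : s ≤ 1) (hs'1 : s' ≤ 1) {a b : ℝ} (ha : 0 ≤ a) (hab : a ≤ b) :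
    ∫ r in Icc a b, (√(c * powerKernel (2 * H - 1) s' r) - √(c * powerKernel (2 * H - 1) s r)) ^ 2
      ≤ c * (2 * ((b - a) ^ H / H)) := by
  have hp : -1 < 2 * H - 1 := by linarith
  calc _ ≤ (∫ r in Icc a b, c * powerKernel (2 * H - 1) s' r)
          + ∫ r in Icc a b, c * powerKernel (2 * H - 1) s r :=
        integral_sqrt_sub_sqrt_sq_le_integral_add (fun r => mul_nonneg hc (nonneg _ _ r))
          (fun r => mul_nonneg hc (nonneg _ _ r)) ((integrable hp).const_mul c).integrableOn
          ((integrable hp).const_mul c).integrableOn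
    _ = c * ((∫ r in Icc a b, powerKernel (2 * H - 1) s' r)
          + ∫ r in Icc a b, powerKernel (2 * H - 1) s r) := by
        rw [integral_const_mul, integral_const_mul, mul_add]
    _ ≤ c * ((b - a) ^ H / H + (b - a) ^ H / H) := by
        gcongr
        exacts [setIntegral_Icc_le hH0 hH1 hs'1 ha hab, setIntegral_Icc_le hH0 hH1 hs1 ha hab]
    _ = c * (2 * ((b - a) ^ H / H)) := by ring

end powerKernel

/-- The Holmgren–Riemann–Liouville kernel
`K(t,r) = √(2π)(t−r)^{H−1/2} 1_{[0,t]}(r)`, `0 < H < 1`, satisfies conditions (ii')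
and (iii) of hypothesis (H1'). -/
theorem holmgren_riemann_liouville_kernel_satisfies_H1'
    (H : ℝ) (hH : H ∈ Ioo (0:ℝ) 1)
    (K : ℝ → ℝ → ℝ)
    (hK : ∀ t r, K t r
      = Set.indicator (Icc (0:ℝ) t)
          (fun r => Real.sqrt (2 * Real.pi) * (t - r) ^ (H - 1 / 2)) r) :
    ∃ (G : ℝ → ℝ) (ρ M β : ℝ),
      Monotone G ∧ Continuous G ∧ 0 < ρ ∧ ρ ≤ 1 ∧ 0 < M ∧ 0 < β ∧
      (∀ s s' : ℝ, 0 ≤ s → s < s' → s' ≤ 1 →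
        ∫ r in Icc (0:ℝ) 1, (K s' r - K s r) ^ 2 ≤ (G s' - G s) ^ ρ) ∧
      (∀ s s' s₀ s₀' : ℝ, 0 ≤ s → s < s' → s' ≤ 1 → 0 ≤ s₀ → s₀ < s₀' → s₀' ≤ 1 →
        ∫ r in Icc s₀ s₀', (K s' r - K s r) ^ 2 ≤ M * (s₀' - s₀) ^ β) := by
  obtain ⟨hH0, hH1⟩ := hH
  have hc : 0 ≤ 2 * Real.pi := by positivity
  have hC : 0 ≤ 2 * Real.pi / H := by positivity
  have hK' : ∀ t r, K t r = √(2 * Real.pi * powerKernel (2 * H - 1) t r) := fun t r => by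
    rw [hK, powerKernel.sqrt_const_mul_eq_indicator hc]
  simp_rw [hK']
  refine ⟨fun t => (2 * Real.pi / H) ^ H⁻¹ * t, H, 4 * Real.pi / H, H,
    monotone_id.const_mul (Real.rpow_nonneg hC _), continuous_const.mul continuous_id, hH0, hH1.le,
    by positivity, hH0, fun s s' hs hss' hs'1 => ?_,
    fun s s' s₀ s₀' hs hss' hs'1 hs₀ hs₀s₀' _ => ?_⟩
  · rw [← mul_sub, Real.mul_rpow (Real.rpow_nonneg hC _) (sub_nonneg.2 hss'.le),
      Real.rpow_inv_rpow hC hH0.ne']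
    calc _ ≤ 2 * Real.pi * ((s' - s) ^ H / H) :=
          powerKernel.setIntegral_sqrt_const_mul_sub_sq_le hc hH0 hH1.le hs hss'.le hs'1 _
      _ = 2 * Real.pi / H * (s' - s) ^ H := by ring
  · calc _ ≤ 2 * Real.pi * (2 * ((s₀' - s₀) ^ H / H)) :=
          powerKernel.setIntegral_Icc_sqrt_const_mul_sub_sq_le hc hH0 hH1.le
            (hss'.le.trans hs'1) hs'1 hs₀ hs₀s₀'.le
      _ = 4 * Real.pi / H * (s₀' - s₀) ^ H := by ring
end

section
/- A Goursat kernel K(t,r) = Σ_{i=1}^I g_i(t)h_i(r)1_{[0,t]}(r) with g_i Hölder continuous of order γ₁ ∈ (0,1], h_i ∈ L²([0,1]), and F_i(t) = ∫₀ᵗ h_i(r)² dr Hölder continuous of order γ₂ ∈ (0,1], satisfies conditions (ii') and (iii) of hypothesis (H1'): ∫₀¹(K(s',r)−K(s,r))²dr ≤ (G(s')−G(s))^ρ for some increasing continuous G and ρ ∈ (0,1], and ∫_{s₀}^{s₀'}(K(s',r)−K(s,r))²dr ≤ M(s₀'−s₀)^β for some M, β > 0, uniformly in 0 ≤ s < s'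 ≤ 1. -/
/-!
For `s ≤ s'` the difference `K(s',·) - K(s,·)` equals `∑ (gᵢ(s') - gᵢ(s)) hᵢ` on `[0,s]`,
`∑ gᵢ(s') hᵢ` on `(s,s']`, and vanishes elsewhere. Cauchy–Schwarz over `i` bounds its square
pointwise by `I c² ∑ hᵢ²`, where `c` is the Hölder increment `C₁ (s' - s)^γ₁` on the first piece
and a uniform bound `B` of the `gᵢ` on `[0,1]` on the second. Integrating against the Hölder bound
on `∫ hᵢ²` gives (ii') with a linear `G` and `ρ = min (2γ₁, γ₂, 1)`, and (iii) with `β = γ₂`.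
-/

open MeasureTheory Set

noncomputable def goursatKernel {ι : Type*} [Fintype ι] (g h : ι → ℝ → ℝ) (t r : ℝ) : ℝ :=
  (Icc 0 t).indicator (fun r => ∑ i, g i t * h i r) r

theorem sq_sum_mul_le_of_abs_le {ι : Type*} [Fintype ι] {a : ι → ℝ} {B : ℝ}
    (ha : ∀ i, |a i| ≤ B) (b : ι → ℝ) :
    (∑ i, a i * b i) ^ 2 ≤ Fintype.card ι * B ^ 2 * ∑ i, b i ^ 2 :=
  calc (∑ i, a i * b i) ^ 2 ≤ (∑ i, a i ^ 2) * ∑ i, b i ^ 2 :=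
        Finset.sum_mul_sq_le_sq_mul_sq _ _ _
    _ ≤ (∑ _i : ι, B ^ 2) * ∑ i, b i ^ 2 :=
        mul_le_mul_of_nonneg_right (Finset.sum_le_sum fun i _ =>
          sq_le_sq' (abs_le.1 (ha i)).1 (abs_le.1 (ha i)).2) (by positivity)
    _ = Fintype.card ι * B ^ 2 * ∑ i, b i ^ 2 := by simp

theorem integral_fintype_sum_le_card_mul {ι α : Type*} [Fintype ι] [MeasurableSpace α]
    {μ : Measure α} {f : ι → α → ℝ} {c : ℝ} (hf : ∀ i, Integrable (f i) μ)
    (hc : ∀ i, ∫ a, f i a ∂μ ≤ c) :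
    ∫ a, ∑ i, f i a ∂μ ≤ Fintype.card ι * c := by
  rw [integral_finsetSum _ fun i _ => hf i]
  exact (Finset.sum_le_sum fun i _ => hc i).trans_eq (by simp)

theorem mul_rpow_add_mul_rpow_le {x a b p q ρ : ℝ} (hx₀ : 0 < x) (hx₁ : x ≤ 1)
    (ha : 0 ≤ a) (hb : 0 ≤ b) (hp : ρ ≤ p) (hq : ρ ≤ q) :
    a * x ^ p + b * x ^ q ≤ (a + b) * x ^ ρ :=
  (add_mul a b _).symm ▸ add_le_add
    (mul_le_mul_of_nonneg_left (Real.rpow_le_rpow_of_exponent_ge hx₀ hx₁ hp) ha)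
    (mul_le_mul_of_nonneg_left (Real.rpow_le_rpow_of_exponent_ge hx₀ hx₁ hq) hb)

theorem exists_abs_le_of_holder_Icc {ι : Type*} [Fintype ι] {g : ι → ℝ → ℝ} {C γ : ℝ}
    (hC : 0 ≤ C) (hγ : 0 ≤ γ)
    (hg : ∀ i, ∀ x ∈ Icc (0:ℝ) 1, ∀ y ∈ Icc (0:ℝ) 1, |g i x - g i y| ≤ C * |x - y| ^ γ) :
    ∃ B, ∀ i, ∀ t ∈ Icc (0:ℝ) 1, |g i t| ≤ B := by
  refine ⟨C + ∑ i, |g i 0|, fun i t ht => ?_⟩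
  have hdist : |g i t - g i 0| ≤ C := by
    refine (hg i t ht 0 ⟨le_rfl, zero_le_one⟩).trans (mul_le_of_le_one_right hC ?_)
    rw [sub_zero, abs_of_nonneg ht.1]
    exact Real.rpow_le_one ht.1 ht.2 hγ
  have hsum : |g i 0| ≤ ∑ j, |g j 0| :=
    Finset.single_le_sum (fun j _ => abs_nonneg (g j 0)) (Finset.mem_univ i)
  linarith [abs_sub_abs_le_abs_sub (g i t) (g i 0)]

section GoursatKernel

variable {ι : Type*} [Fintype ι] {g h : ι → ℝ → ℝ} {s s' : ℝ}

theorem goursatKernel_sub_of_mem_Icc {r : ℝ} (hss' : s ≤ s') (hr : r ∈ Icc 0 s) :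
    goursatKernel g h s' r - goursatKernel g h s r = ∑ i, (g i s' - g i s) * h i r := by
  rw [goursatKernel, goursatKernel, indicator_of_mem (Icc_subset_Icc_right hss' hr),
    indicator_of_mem hr, ← Finset.sum_sub_distrib]
  simp only [sub_mul]

theorem goursatKernel_sub_of_mem_Ioc {r : ℝ} (hs : 0 ≤ s) (hr : r ∈ Ioc s s') :
    goursatKernel g h s' r - goursatKernel g h s r = ∑ i, g i s' * h i r := by
  rw [goursatKernel, goursatKernel, indicator_of_mem (mem_Icc.2 ⟨hs.trans hr.1.le, hr.2⟩),
    indicator_of_notMem fun hr' => hr.1.not_ge hr'.2, sub_zero]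

theorem goursatKernel_sub_of_notMem_Icc {r : ℝ} (hss' : s ≤ s') (hr : r ∉ Icc 0 s') :
    goursatKernel g h s' r - goursatKernel g h s r = 0 := by
  rw [goursatKernel, goursatKernel, indicator_of_notMem hr,
    indicator_of_notMem fun hr' => hr (Icc_subset_Icc_right hss' hr'), sub_zero]

variable {D B : ℝ}

theorem sq_goursatKernel_sub_le (hs : 0 ≤ s) (hss' : s ≤ s')
    (hD : ∀ i, |g i s' - g i s| ≤ D) (hB : ∀ i, |g i s'| ≤ B) (r : ℝ) :
    (goursatKernel g h s' r - goursatKernel g h s r) ^ 2 ≤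
      Fintype.card ι * ((Icc 0 s).indicator (fun r => D ^ 2 * ∑ i, h i r ^ 2) r
        + (Ioc s s').indicator (fun r => B ^ 2 * ∑ i, h i r ^ 2) r) := by
  by_cases hr₁ : r ∈ Icc 0 s
  · have hr₂ : r ∉ Ioc s s' := fun hr₂ => hr₂.1.not_ge hr₁.2
    rw [goursatKernel_sub_of_mem_Icc hss' hr₁, indicator_of_mem hr₁, indicator_of_notMem hr₂,
      add_zero, ← mul_assoc]
    exact sq_sum_mul_le_of_abs_le hD _
  by_cases hr₂ : r ∈ Ioc s s'
  · rw [goursatKernel_sub_of_mem_Ioc hs hr₂, indicator_of_notMem hr₁, indicator_of_mem hr₂,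
      zero_add, ← mul_assoc]
    exact sq_sum_mul_le_of_abs_le hB _
  · have hr : r ∉ Icc 0 s' := fun hr =>
      (le_or_gt r s).elim (fun hrs => hr₁ ⟨hr.1, hrs⟩) fun hsr => hr₂ ⟨hsr, hr.2⟩
    simp [goursatKernel_sub_of_notMem_Icc hss' hr, indicator_of_notMem hr₁,
      indicator_of_notMem hr₂]

theorem setIntegral_sq_goursatKernel_sub_le {S : Set ℝ} (hs : 0 ≤ s) (hss' : s ≤ s')
    (hs' : s' ≤ 1) (hB : ∀ i, ∀ t ∈ Icc (0:ℝ) 1, |g i t| ≤ B)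
    (hh : ∀ i, IntegrableOn (fun r => h i r ^ 2) S) :
    ∫ r in S, (goursatKernel g h s' r - goursatKernel g h s r) ^ 2 ≤
      Fintype.card ι * ((2 * B) ^ 2 + B ^ 2) * ∫ r in S, ∑ i, h i r ^ 2 := by
  have hBs' : ∀ i, |g i s'| ≤ B := fun i => hB i s' ⟨hs.trans hss', hs'⟩
  have hD : ∀ i, |g i s' - g i s| ≤ 2 * B := fun i =>
    (abs_sub _ _).trans (by linarith [hBs' i, hB i s ⟨hs, hss'.trans hs'⟩])
  have hH : ∀ r, 0 ≤ ∑ i, h i r ^ 2 := fun r => by positivity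
  rw [← integral_const_mul]
  refine integral_mono_of_nonneg (ae_of_all _ fun r => sq_nonneg _)
    ((integrable_finsetSum _ fun i _ => hh i).const_mul _) (ae_of_all _ fun r => ?_)
  refine (sq_goursatKernel_sub_le hs hss' hD hBs' r).trans ?_
  dsimp only
  rw [mul_assoc, add_mul]
  gcongr
  · exact indicator_le_self' (fun r _ => mul_nonneg (sq_nonneg _) (hH r)) r
  · exact indicator_le_self' (fun r _ => mul_nonneg (sq_nonneg B) (hH r)) r

theorem integral_sq_goursatKernel_sub_le (hs : 0 ≤ s) (hss' : s ≤ s') (hs' : s' ≤ 1)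
    (hD : ∀ i, |g i s' - g i s| ≤ D) (hB : ∀ i, |g i s'| ≤ B)
    (hh : ∀ i, IntegrableOn (fun r => h i r ^ 2) (Icc 0 1)) :
    ∫ r in Icc (0:ℝ) 1, (goursatKernel g h s' r - goursatKernel g h s r) ^ 2 ≤
      Fintype.card ι * (D ^ 2 * (∫ r in Icc 0 s, ∑ i, h i r ^ 2)
        + B ^ 2 * ∫ r in Icc s s', ∑ i, h i r ^ 2) := by
  have hA : Icc 0 s ⊆ Icc (0:ℝ) 1 := Icc_subset_Icc_right (hss'.trans hs')
  have hB' : Ioc s s' ⊆ Icc (0:ℝ) 1 := Ioc_subset_Icc_self.trans (Icc_subset_Icc hs hs')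
  have hH : IntegrableOn (fun r => ∑ i, h i r ^ 2) (Icc 0 1) :=
    integrable_finsetSum _ fun i _ => hh i
  calc ∫ r in Icc (0:ℝ) 1, (goursatKernel g h s' r - goursatKernel g h s r) ^ 2
      ≤ ∫ r in Icc (0:ℝ) 1, Fintype.card ι *
          ((Icc 0 s).indicator (fun r => D ^ 2 * ∑ i, h i r ^ 2) r
            + (Ioc s s').indicator (fun r => B ^ 2 * ∑ i, h i r ^ 2) r) :=
        integral_mono_of_nonneg (ae_of_all _ fun r => sq_nonneg _)
          ((((hH.const_mul _).indicator measurableSet_Icc).add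
            ((hH.const_mul _).indicator measurableSet_Ioc)).const_mul _)
          (ae_of_all _ (sq_goursatKernel_sub_le hs hss' hD hB))
    _ = Fintype.card ι * (D ^ 2 * (∫ r in Icc 0 s, ∑ i, h i r ^ 2)
          + B ^ 2 * ∫ r in Icc s s', ∑ i, h i r ^ 2) := by
        rw [integral_const_mul, integral_add ((hH.const_mul _).indicator measurableSet_Icc)
            ((hH.const_mul _).indicator measurableSet_Ioc),
          setIntegral_indicator measurableSet_Icc, setIntegral_indicator measurableSet_Ioc,
          inter_eq_right.2 hA, inter_eq_right.2 hB', integral_const_mul, integral_const_mul,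
          integral_Icc_eq_integral_Ioc (x := s)]

theorem integral_sq_goursatKernel_sub_le_rpow {C₁ γ₁ C γ ρ : ℝ} (hs : 0 ≤ s) (hss' : s < s')
    (hs' : s' ≤ 1)
    (hg : ∀ i, ∀ x ∈ Icc (0:ℝ) 1, ∀ y ∈ Icc (0:ℝ) 1, |g i x - g i y| ≤ C₁ * |x - y| ^ γ₁)
    (hB : ∀ i, ∀ t ∈ Icc (0:ℝ) 1, |g i t| ≤ B)
    (hh : ∀ i, IntegrableOn (fun r => h i r ^ 2) (Icc 0 1))
    (hH : ∀ a b : ℝ, 0 ≤ a → a ≤ b → b ≤ 1 →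
      ∫ r in Icc a b, ∑ i, h i r ^ 2 ≤ C * (b - a) ^ γ)
    (hC : 0 ≤ C) (hγ : 0 ≤ γ) (hρ₁ : ρ ≤ 2 * γ₁) (hρ₂ : ρ ≤ γ) :
    ∫ r in Icc (0:ℝ) 1, (goursatKernel g h s' r - goursatKernel g h s r) ^ 2 ≤
      Fintype.card ι * C * (C₁ ^ 2 + B ^ 2) * (s' - s) ^ ρ := by
  have hx : 0 < s' - s := sub_pos.2 hss'
  have hs'₁ : s' ∈ Icc (0:ℝ) 1 := ⟨hs.trans hss'.le, hs'⟩
  have hD : ∀ i, |g i s' - g i s| ≤ C₁ * (s' - s) ^ γ₁ := fun i => by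
    simpa [abs_of_pos hx] using hg i s' hs'₁ s ⟨hs, hss'.le.trans hs'⟩
  have hH₀ : ∫ r in Icc 0 s, ∑ i, h i r ^ 2 ≤ C :=
    (hH 0 s le_rfl hs (hss'.le.trans hs')).trans
      (mul_le_of_le_one_right hC (Real.rpow_le_one (by linarith) (by linarith) hγ))
  calc ∫ r in Icc (0:ℝ) 1, (goursatKernel g h s' r - goursatKernel g h s r) ^ 2
      ≤ Fintype.card ι * ((C₁ * (s' - s) ^ γ₁) ^ 2 * (∫ r in Icc 0 s, ∑ i, h i r ^ 2)
          + B ^ 2 * ∫ r in Icc s s', ∑ i, h i r ^ 2) :=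
        integral_sq_goursatKernel_sub_le hs hss'.le hs' hD (fun i => hB i s' hs'₁) hh
    _ ≤ Fintype.card ι * ((C₁ * (s' - s) ^ γ₁) ^ 2 * C + B ^ 2 * (C * (s' - s) ^ γ)) := by
        gcongr
        exact hH s s' hs hss'.le hs'
    _ = Fintype.card ι * C * (C₁ ^ 2 * (s' - s) ^ (2 * γ₁) + B ^ 2 * (s' - s) ^ γ) := by
        rw [mul_comm 2 γ₁, Real.rpow_mul hx.le, Real.rpow_two]
        ring
    _ ≤ Fintype.card ι * C * ((C₁ ^ 2 + B ^ 2) * (s' - s) ^ ρ) := by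
        gcongr
        exact mul_rpow_add_mul_rpow_le hx (by linarith) (sq_nonneg _) (sq_nonneg _) hρ₁ hρ₂
    _ = Fintype.card ι * C * (C₁ ^ 2 + B ^ 2) * (s' - s) ^ ρ := by ring

end GoursatKernel

theorem goursat_kernel_satisfies_H1'_general
    (I : ℕ) (g h : Fin I → ℝ → ℝ) (γ1 γ2 C1 C2 : ℝ)
    (hγ1 : 0 < γ1) (hγ2 : 0 < γ2)
    (hC1 : 0 ≤ C1) (hC2 : 0 ≤ C2)
    (hghol : ∀ i, ∀ x ∈ Icc (0:ℝ) 1, ∀ y ∈ Icc (0:ℝ) 1,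
      |g i x - g i y| ≤ C1 * |x - y| ^ γ1)
    (hhL2 : ∀ i, MemLp (h i) 2 (volume.restrict (Icc (0:ℝ) 1)))
    (hFhol : ∀ i, ∀ s s' : ℝ, 0 ≤ s → s ≤ s' → s' ≤ 1 →
      ∫ r in Icc s s', (h i r) ^ 2 ≤ C2 * (s' - s) ^ γ2)
    (K : ℝ → ℝ → ℝ)
    (hK : ∀ t r, K t r
      = Set.indicator (Icc (0:ℝ) t) (fun r => ∑ i, g i t * h i r) r) :
    ∃ (G : ℝ → ℝ) (ρ M β : ℝ),
      Monotone G ∧ Continuous G ∧ 0 < ρ ∧ ρ ≤ 1 ∧ 0 < M ∧ 0 < β ∧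
      (∀ s s' : ℝ, 0 ≤ s → s < s' → s' ≤ 1 →
        ∫ r in Icc (0:ℝ) 1, (K s' r - K s r) ^ 2 ≤ (G s' - G s) ^ ρ) ∧
      (∀ s s' s₀ s₀' : ℝ, 0 ≤ s → s < s' → s' ≤ 1 → 0 ≤ s₀ → s₀ < s₀' → s₀' ≤ 1 →
        ∫ r in Icc s₀ s₀', (K s' r - K s r) ^ 2 ≤ M * (s₀' - s₀) ^ β) := by
  obtain rfl : K = goursatKernel g h := funext₂ hK
  obtain ⟨B, hB⟩ := exists_abs_le_of_holder_Icc hC1 hγ1.le hghol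
  have hh : ∀ i, IntegrableOn (fun r => h i r ^ 2) (Icc 0 1) := fun i => (hhL2 i).integrable_sq
  set n : ℝ := (Fintype.card (Fin I) : ℝ)
  have hH : ∀ a b : ℝ, 0 ≤ a → a ≤ b → b ≤ 1 →
      ∫ r in Icc a b, ∑ i, h i r ^ 2 ≤ n * C2 * (b - a) ^ γ2 := fun a b ha hab hb =>
    (integral_fintype_sum_le_card_mul (fun i => (hh i).mono_set (Icc_subset_Icc ha hb))
      fun i => hFhol i a b ha hab hb).trans_eq (mul_assoc _ _ _).symm
  set ρ := min (min (2 * γ1) γ2) 1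
  have hρ : 0 < ρ := lt_min (lt_min (by positivity) hγ2) one_pos
  set A := n * (n * C2) * (C1 ^ 2 + B ^ 2)
  refine ⟨fun t => A ^ ρ⁻¹ * t, ρ, n * (n * C2) * ((2 * B) ^ 2 + B ^ 2) + 1, γ2,
    fun a b hab => by dsimp only; gcongr, by fun_prop, hρ, min_le_right _ _, by positivity, hγ2,
    fun s s' hs hss' hs' => ?_, fun s s' s₀ s₀' hs hss' hs' hs₀ hs₀s₀' hs₀' => ?_⟩
  · rw [← mul_sub, Real.mul_rpow (by positivity) (by linarith),
      Real.rpow_inv_rpow (by positivity) hρ.ne']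
    exact integral_sq_goursatKernel_sub_le_rpow hs hss' hs' hghol hB hh hH (by positivity) hγ2.le
      ((min_le_left _ _).trans (min_le_left _ _)) ((min_le_left _ _).trans (min_le_right _ _))
  · have hx : 0 ≤ (s₀' - s₀) ^ γ2 := Real.rpow_nonneg (by linarith) _
    calc ∫ r in Icc s₀ s₀', (goursatKernel g h s' r - goursatKernel g h s r) ^ 2
        ≤ n * ((2 * B) ^ 2 + B ^ 2) * ∫ r in Icc s₀ s₀', ∑ i, h i r ^ 2 :=
          setIntegral_sq_goursatKernel_sub_le hs hss'.le hs' hB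
            fun i => (hh i).mono_set (Icc_subset_Icc hs₀ hs₀')
      _ ≤ n * ((2 * B) ^ 2 + B ^ 2) * (n * C2 * (s₀' - s₀) ^ γ2) := by
          gcongr
          exact hH s₀ s₀' hs₀ hs₀s₀'.le hs₀'
      _ ≤ (n * (n * C2) * ((2 * B) ^ 2 + B ^ 2) + 1) * (s₀' - s₀) ^ γ2 := by nlinarith

/-- A Goursat kernel `K(t,r) = Σ_{i=1}^I g_i(t)h_i(r)1_{[0,t]}(r)`, with `g_i`
Hölder continuous of order `γ₁ ∈ (0,1]`, `h_i ∈ L²([0,1])`, and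
`F_i(t) = ∫₀ᵗ h_i²` Hölder continuous of order `γ₂ ∈ (0,1]`, satisfies conditions
(ii') and (iii) of hypothesis (H1'). -/
theorem goursat_kernel_satisfies_H1'
    (I : ℕ) (g h : Fin I → ℝ → ℝ) (γ1 γ2 C1 C2 : ℝ)
    (hγ1 : 0 < γ1) (hγ1' : γ1 ≤ 1) (hγ2 : 0 < γ2) (hγ2' : γ2 ≤ 1)
    (hC1 : 0 ≤ C1) (hC2 : 0 ≤ C2)
    (hghol : ∀ i, ∀ x ∈ Icc (0:ℝ) 1, ∀ y ∈ Icc (0:ℝ) 1,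
      |g i x - g i y| ≤ C1 * |x - y| ^ γ1)
    (hhmeas : ∀ i, Measurable (h i))
    (hhL2 : ∀ i, MemLp (h i) 2 (volume.restrict (Icc (0:ℝ) 1)))
    (hFhol : ∀ i, ∀ s s' : ℝ, 0 ≤ s → s ≤ s' → s' ≤ 1 →
      ∫ r in Icc s s', (h i r) ^ 2 ≤ C2 * (s' - s) ^ γ2)
    (K : ℝ → ℝ → ℝ)
    (hK : ∀ t r, K t r
      = Set.indicator (Icc (0:ℝ) t) (fun r => ∑ i, g i t * h i r) r) :
    ∃ (G : ℝ → ℝ) (ρ M β : ℝ),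
      Monotone G ∧ Continuous G ∧ 0 < ρ ∧ ρ ≤ 1 ∧ 0 < M ∧ 0 < β ∧
      (∀ s s' : ℝ, 0 ≤ s → s < s' → s' ≤ 1 →
        ∫ r in Icc (0:ℝ) 1, (K s' r - K s r) ^ 2 ≤ (G s' - G s) ^ ρ) ∧
      (∀ s s' s₀ s₀' : ℝ, 0 ≤ s → s < s' → s' ≤ 1 → 0 ≤ s₀ → s₀ < s₀' → s₀' ≤ 1 →
        ∫ r in Icc s₀ s₀', (K s' r - K s r) ^ 2 ≤ M * (s₀' - s₀) ^ β) :=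
  goursat_kernel_satisfies_H1'_general I g h γ1 γ2 C1 C2 hγ1 hγ2 hC1 hC2 hghol hhL2 hFhol K hK
end
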